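/- DNI is invariant under branching team equivalence: if m and m' are markings of a finite-state machine N with m ≈^⊕ m', and m satisfies DNI, then m' satisfies DNI. -/
import Mathlib


/- Common framework: finite-state machines (FSMs) in the sense of Gorrieri.
   Places form a type `S`, labels a type `A` with a distinguished silent label `tau`.
   A transition is a triple `(s, ℓ, m) : S × A × Option S`, where the post-set `m`
   is either a single place (`some s'`) or the empty marking θ (`none`).
   An FSM is given by a finite set `T` of such transitions. -/

variable {S A : Type*}

/-- `Tr T s ℓ m` : place `s` has a transition labeled `ℓ` to post-set `m` (a place or θ). -/
def Tr (T : Finset (S × A × Option S)) (s : S) (ℓ : A) (m : Option S) : Prop :=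
  (s, ℓ, m) ∈ T

/-- `SilentReach T tau s m` : `s ⇒ε m`, the reflexive–transitive closure of silent moves. -/
inductive SilentReach (T : Finset (S × A × Option S)) (tau : A) : S → Option S → Prop
  | refl (s : S) : SilentReach T tau s (some s)
  | step {s s' : S} {m : Option S} :
      SilentReach T tau s (some s') → Tr T s' tau m → SilentReach T tau s m

/-- Lift of a place relation to `Option S`; a pair involving θ (`none`) is related
    only when both components are θ. -/
def OptRel (R : S → S → Prop) : Option S → Option S → Prop
  | some a, some b => R a b
  | none, none => True
  | _, _ => False

/-- `R` is a branching bisimulation on the FSM with transitions `T` and silent label `tau`. -/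
def IsBranchingBisim (T : Finset (S × A × Option S)) (tau : A) (R : S → S → Prop) : Prop :=
  ∀ s1 s2, R s1 s2 →
    (∀ ℓ m1, Tr T s1 ℓ m1 →
        (ℓ = tau ∧ ∃ m2, SilentReach T tau s2 m2 ∧ OptRel R (some s1) m2 ∧ OptRel R m1 m2) ∨
        (∃ s m2, SilentReach T tau s2 (some s) ∧ Tr T s ℓ m2 ∧ R s1 s ∧ OptRel R m1 m2)) ∧
    (∀ ℓ m2, Tr T s2 ℓ m2 →
        (ℓ = tau ∧ ∃ m1, SilentReach T tau s1 m1 ∧ OptRel R m1 (some s2) ∧ OptRel R m1 m2) ∨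
        (∃ s m1, SilentReach T tau s1 (some s) ∧ Tr T s ℓ m1 ∧ R s s2 ∧ OptRel R m1 m2))

/-- Branching bisimilarity on places: `s ≈ s'` iff some branching bisimulation relates them. -/
def Bisimilar (T : Finset (S × A × Option S)) (tau : A) (s s' : S) : Prop :=
  ∃ R, IsBranchingBisim T tau R ∧ R s s'

/-- Rooted branching bisimilarity `≈_c` on places. -/
def RootedBisimilar (T : Finset (S × A × Option S)) (tau : A) (s1 s2 : S) : Prop :=
  ∀ ℓ : A,
    (∀ m1, Tr T s1 ℓ m1 → ∃ m2, Tr T s2 ℓ m2 ∧ OptRel (Bisimilar T tau) m1 m2) ∧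
    (∀ m2, Tr T s2 ℓ m2 → ∃ m1, Tr T s1 ℓ m1 ∧ OptRel (Bisimilar T tau) m1 m2)

/-- The post-set of a transition, as a marking (multiset). -/
def mpost (m : Option S) : Multiset S :=
  m.elim 0 (fun s => {s})

variable [DecidableEq S] [DecidableEq A]

/-- `Fires T m t m'` : transition `t` is enabled at marking `m` (`•t ∈ m`) and its
    firing produces `m' = (m ⊖ •t) ⊕ t•`. -/
def Fires (T : Finset (S × A × Option S)) (m : Multiset S) (t : S × A × Option S)
    (m' : Multiset S) : Prop :=
  t ∈ T ∧ t.1 ∈ m ∧ m' = m.erase t.1 + mpost t.2.2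

/-- `MStep T m ℓ m'` : marking `m` evolves to `m'` by firing some `ℓ`-labeled transition. -/
def MStep (T : Finset (S × A × Option S)) (m : Multiset S) (ℓ : A) (m' : Multiset S) : Prop :=
  ∃ t, Fires T m t m' ∧ t.2.1 = ℓ

/-- `Reach T m m'` : `m' ∈ reach(m)`, i.e. `m'` is reachable from `m` by a firing sequence. -/
def Reach (T : Finset (S × A × Option S)) : Multiset S → Multiset S → Prop :=
  Relation.ReflTransGen (fun m m' => ∃ t, Fires T m t m')

/-- The additive closure `R^⊕` of a place relation `R`, relating markings. -/
inductive AddClosure (R : S → S → Prop) : Multiset S → Multiset S → Prop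
  | zero : AddClosure R 0 0
  | cons {s1 s2 : S} {m1 m2 : Multiset S} :
      R s1 s2 → AddClosure R m1 m2 → AddClosure R (s1 ::ₘ m1) (s2 ::ₘ m2)

/-- The restricted net `N \ H`: all transitions with a label in `H` are pruned.
    (Places `s\H` of the restricted net are identified with the places `s` of `N`.) -/
def restrictNet (T : Finset (S × A × Option S)) (H : Finset A) : Finset (S × A × Option S) :=
  T.filter (fun t => t.2.1 ∉ H)

/-- `DNI T tau H m0` : for all markings `m1, m2` reachable from `m0` and every `h ∈ H`
    with `m1 →h m2`, the restricted markings are branching team equivalent in `N \ H`. -/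
def DNI (T : Finset (S × A × Option S)) (tau : A) (H : Finset A) (m0 : Multiset S) : Prop :=
  ∀ m1 m2, Reach T m0 m1 → Reach T m0 m2 →
    ∀ h ∈ H, MStep T m1 h m2 → AddClosure (Bisimilar (restrictNet T H) tau) m1 m2

/-- `FiresSeq T m σ m'` : the transition sequence `σ` can fire from `m` ending in `m'`. -/
inductive FiresSeq (T : Finset (S × A × Option S)) : Multiset S → List (S × A × Option S) → Multiset S → Prop
  | nil (m : Multiset S) : FiresSeq T m [] m
  | cons {m m' m'' : Multiset S} {t : S × A × Option S} {σ : List (S × A × Option S)} :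
      Fires T m t m' → FiresSeq T m' σ m'' → FiresSeq T m (t :: σ) m''

set_option linter.unusedSectionVars false
set_option linter.unusedVariables false

section Aux

variable {T : Finset (S × A × Option S)} {tau : A} {H : Finset A}

/-! ### OptRel helpers -/

lemma optRel_imp {R R' : S → S → Prop} (h : ∀ a b, R a b → R' a b) :
    ∀ {o1 o2 : Option S}, OptRel R o1 o2 → OptRel R' o1 o2
  | some a, some b, hr => h a b hr
  | none, none, _ => trivial

lemma optRel_flip {R : S → S → Prop} :
    ∀ {o1 o2 : Option S}, OptRel R o1 o2 → OptRel (fun a b => R b a) o2 o1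
  | some _, some _, hr => hr
  | none, none, _ => trivial

lemma optRel_comp {R1 R2 : S → S → Prop} :
    ∀ {a b c : Option S}, OptRel R1 a b → OptRel R2 b c →
      OptRel (fun x z => ∃ y, R1 x y ∧ R2 y z) a c
  | some _, some _, some _, h1, h2 => ⟨_, h1, h2⟩
  | none, none, none, _, _ => trivial
  | some _, none, _, h1, _ => h1.elim
  | none, some _, _, h1, _ => h1.elim
  | some _, some _, none, _, h2 => h2.elim
  | none, none, some _, _, h2 => h2.elim

lemma optRel_refl_eq : ∀ (o : Option S), OptRel (fun a b : S => a = b) o o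
  | some _ => rfl
  | none => trivial

/-! ### SilentReach helpers -/

lemma silentReach_trans {s t : S} {m : Option S}
    (h1 : SilentReach T tau s (some t)) (h2 : SilentReach T tau t m) :
    SilentReach T tau s m := by
  induction h2 with
  | refl => exact h1
  | step _ htr ih => exact SilentReach.step ih htr

/-! ### Branching bisimilarity is an equivalence -/

lemma isBisim_eq : IsBranchingBisim T tau (fun a b : S => a = b) := by
  intro s1 s2 h
  subst h
  constructor
  · intro ℓ m1 htr
    exact Or.inr ⟨s1, m1, SilentReach.refl s1, htr, rfl, optRel_refl_eq m1⟩
  · intro ℓ m2 htr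
    exact Or.inr ⟨s1, m2, SilentReach.refl s1, htr, rfl, optRel_refl_eq m2⟩

lemma isBisim_flip {R : S → S → Prop} (h : IsBranchingBisim T tau R) :
    IsBranchingBisim T tau (fun a b => R b a) := by
  intro s1 s2 h12
  obtain ⟨c1, c2⟩ := h s2 s1 h12
  constructor
  · intro ℓ m1 htr
    rcases c2 ℓ m1 htr with ⟨hτ, m2, hsr, ha, hb⟩ | ⟨u, m2, hsr, htr2, hc, hb⟩
    · exact Or.inl ⟨hτ, m2, hsr, optRel_flip ha, optRel_flip hb⟩
    · exact Or.inr ⟨u, m2, hsr, htr2, hc, optRel_flip hb⟩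
  · intro ℓ m2 htr
    rcases c1 ℓ m2 htr with ⟨hτ, m1, hsr, ha, hb⟩ | ⟨u, m1, hsr, htr2, hc, hb⟩
    · exact Or.inl ⟨hτ, m1, hsr, optRel_flip ha, optRel_flip hb⟩
    · exact Or.inr ⟨u, m1, hsr, htr2, hc, optRel_flip hb⟩

lemma silent_match {R : S → S → Prop} (hB : IsBranchingBisim T tau R)
    {s : S} {m : Option S} (h : SilentReach T tau s m) :
    ∀ {t : S}, R s t → ∃ m', SilentReach T tau t m' ∧ OptRel R m m' := by
  induction h with
  | refl =>
    intro t hst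
    exact ⟨some t, SilentReach.refl t, hst⟩
  | step hpre htr ih =>
    intro t hst
    obtain ⟨m'', hsr, hrel⟩ := ih hst
    cases m'' with
    | none => exact hrel.elim
    | some t1 =>
      rcases (hB _ t1 hrel).1 tau _ htr with ⟨_, m2, hsr2, _, hr2⟩ | ⟨u, m2, hsr2, htr2, _, hr2⟩
      · exact ⟨m2, silentReach_trans hsr hsr2, hr2⟩
      · exact ⟨m2, SilentReach.step (silentReach_trans hsr hsr2) htr2, hr2⟩

lemma comp_half {R1 R2 : S → S → Prop}
    (h1 : IsBranchingBisim T tau R1) (h2 : IsBranchingBisim T tau R2)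
    (s1 s2 s3 : S) (h12 : R1 s1 s2) (h23 : R2 s2 s3) :
    ∀ ℓ m1, Tr T s1 ℓ m1 →
      (ℓ = tau ∧ ∃ m3, SilentReach T tau s3 m3 ∧
        OptRel (fun a c => ∃ b, R1 a b ∧ R2 b c) (some s1) m3 ∧
        OptRel (fun a c => ∃ b, R1 a b ∧ R2 b c) m1 m3) ∨
      (∃ s m3, SilentReach T tau s3 (some s) ∧ Tr T s ℓ m3 ∧
        (∃ b, R1 s1 b ∧ R2 b s) ∧ OptRel (fun a c => ∃ b, R1 a b ∧ R2 b c) m1 m3) := by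
  intro ℓ m1 htr
  rcases (h1 s1 s2 h12).1 ℓ m1 htr with ⟨hτ, m2, hsr2, hr1, hr2⟩ | ⟨u, m2, hsr2, htr2, hru, hr2⟩
  · obtain ⟨m3, hsr3, hR2⟩ := silent_match h2 hsr2 h23
    exact Or.inl ⟨hτ, m3, hsr3, optRel_comp hr1 hR2, optRel_comp hr2 hR2⟩
  · obtain ⟨v', hsr3, hR2⟩ := silent_match h2 hsr2 h23
    cases v' with
    | none => exact hR2.elim
    | some v =>
      rcases (h2 u v hR2).1 ℓ m2 htr2 with ⟨hτ, m3, hsrv, hru', hr3⟩ | ⟨w, m3, hsrv, htr3, hrw, hr3⟩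
      · refine Or.inl ⟨hτ, m3, silentReach_trans hsr3 hsrv, ?_, optRel_comp hr2 hr3⟩
        exact optRel_comp (show OptRel R1 (some s1) (some u) from hru) hru'
      · exact Or.inr ⟨w, m3, silentReach_trans hsr3 hsrv, htr3, ⟨u, hru, hrw⟩,
          optRel_comp hr2 hr3⟩

lemma isBisim_comp {R1 R2 : S → S → Prop}
    (h1 : IsBranchingBisim T tau R1) (h2 : IsBranchingBisim T tau R2) :
    IsBranchingBisim T tau (fun a c => ∃ b, R1 a b ∧ R2 b c) := by
  rintro s1 s3 ⟨s2, h12, h23⟩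
  constructor
  · exact comp_half h1 h2 s1 s2 s3 h12 h23
  · intro ℓ m2 htr
    rcases comp_half (isBisim_flip h2) (isBisim_flip h1) s3 s2 s1 h23 h12 ℓ m2 htr with
      ⟨hτ, m3, hsr, ha, hb⟩ | ⟨u, m3, hsr, htr3, hc, hb⟩
    · refine Or.inl ⟨hτ, m3, hsr, ?_, ?_⟩
      · exact optRel_imp (fun a c h => h.imp (fun b hb' => ⟨hb'.2, hb'.1⟩)) (optRel_flip ha)
      · exact optRel_imp (fun a c h => h.imp (fun b hb' => ⟨hb'.2, hb'.1⟩)) (optRel_flip hb)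
    · refine Or.inr ⟨u, m3, hsr, htr3, ?_, ?_⟩
      · exact hc.imp (fun b hb' => ⟨hb'.2, hb'.1⟩)
      · exact optRel_imp (fun a c h => h.imp (fun b hb' => ⟨hb'.2, hb'.1⟩)) (optRel_flip hb)

lemma bisimilar_refl (T : Finset (S × A × Option S)) (tau : A) (s : S) :
    Bisimilar T tau s s :=
  ⟨fun a b => a = b, isBisim_eq, rfl⟩

lemma bisimilar_symm {s t : S} (h : Bisimilar T tau s t) : Bisimilar T tau t s := by
  obtain ⟨R, hR, hr⟩ := h
  exact ⟨fun a b => R b a, isBisim_flip hR, hr⟩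

lemma bisimilar_trans {s t u : S} (h1 : Bisimilar T tau s t) (h2 : Bisimilar T tau t u) :
    Bisimilar T tau s u := by
  obtain ⟨R1, hR1, hr1⟩ := h1
  obtain ⟨R2, hR2, hr2⟩ := h2
  exact ⟨_, isBisim_comp hR1 hR2, ⟨t, hr1, hr2⟩⟩

lemma isBisim_bisimilar (T : Finset (S × A × Option S)) (tau : A) :
    IsBranchingBisim T tau (Bisimilar T tau) := by
  rintro s1 s2 ⟨R, hR, hr⟩
  obtain ⟨c1, c2⟩ := hR s1 s2 hr
  have hsub : ∀ a b, R a b → Bisimilar T tau a b := fun a b h => ⟨R, hR, h⟩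
  constructor
  · intro ℓ m1 htr
    rcases c1 ℓ m1 htr with ⟨hτ, m2, hsr, ha, hb⟩ | ⟨u, m2, hsr, htr2, hc, hb⟩
    · exact Or.inl ⟨hτ, m2, hsr, optRel_imp hsub ha, optRel_imp hsub hb⟩
    · exact Or.inr ⟨u, m2, hsr, htr2, hsub _ _ hc, optRel_imp hsub hb⟩
  · intro ℓ m2 htr
    rcases c2 ℓ m2 htr with ⟨hτ, m1, hsr, ha, hb⟩ | ⟨u, m1, hsr, htr2, hc, hb⟩
    · exact Or.inl ⟨hτ, m1, hsr, optRel_imp hsub ha, optRel_imp hsub hb⟩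
    · exact Or.inr ⟨u, m1, hsr, htr2, hsub _ _ hc, optRel_imp hsub hb⟩

/-! ### Restriction preserves bisimulations -/

lemma tr_restrict {s : S} {ℓ : A} {m : Option S}
    (h : Tr T s ℓ m) (hl : ℓ ∉ H) : Tr (restrictNet T H) s ℓ m :=
  Finset.mem_filter.2 ⟨h, hl⟩

lemma silentReach_restrict (htau : tau ∉ H) {s : S} {m : Option S}
    (h : SilentReach T tau s m) : SilentReach (restrictNet T H) tau s m := by
  induction h with
  | refl => exact SilentReach.refl _
  | step _ htr ih => exact SilentReach.step ih (tr_restrict htr htau)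

lemma isBisim_restrict {R : S → S → Prop} (htau : tau ∉ H)
    (hR : IsBranchingBisim T tau R) : IsBranchingBisim (restrictNet T H) tau R := by
  intro s1 s2 h12
  obtain ⟨c1, c2⟩ := hR s1 s2 h12
  constructor
  · intro ℓ m1 htr
    obtain ⟨htr', hl⟩ := Finset.mem_filter.1 htr
    rcases c1 ℓ m1 htr' with ⟨hτ, m2, hsr, ha, hb⟩ | ⟨u, m2, hsr, htr2, hc, hb⟩
    · exact Or.inl ⟨hτ, m2, silentReach_restrict htau hsr, ha, hb⟩
    · exact Or.inr ⟨u, m2, silentReach_restrict htau hsr, tr_restrict htr2 hl, hc, hb⟩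
  · intro ℓ m2 htr
    obtain ⟨htr', hl⟩ := Finset.mem_filter.1 htr
    rcases c2 ℓ m2 htr' with ⟨hτ, m1, hsr, ha, hb⟩ | ⟨u, m1, hsr, htr2, hc, hb⟩
    · exact Or.inl ⟨hτ, m1, silentReach_restrict htau hsr, ha, hb⟩
    · exact Or.inr ⟨u, m1, silentReach_restrict htau hsr, tr_restrict htr2 hl, hc, hb⟩

lemma bisimilar_restrict (htau : tau ∉ H) {s t : S} (h : Bisimilar T tau s t) :
    Bisimilar (restrictNet T H) tau s t := by
  obtain ⟨R, hR, hr⟩ := h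
  exact ⟨R, isBisim_restrict htau hR, hr⟩

/-! ### AddClosure helpers -/

lemma addClosure_refl {R : S → S → Prop} (hrefl : ∀ a, R a a) (m : Multiset S) :
    AddClosure R m m :=
  Multiset.induction_on m AddClosure.zero (fun a s ih => AddClosure.cons (hrefl a) ih)

lemma addClosure_card {R : S → S → Prop} {m1 m2 : Multiset S} (h : AddClosure R m1 m2) :
    Multiset.card m1 = Multiset.card m2 := by
  induction h with
  | zero => rfl
  | cons _ _ ih => simp [ih]

lemma addClosure_add {R : S → S → Prop} {a b c d : Multiset S}
    (h1 : AddClosure R a b) (h2 : AddClosure R c d) : AddClosure R (a + c) (b + d) := by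
  induction h1 with
  | zero => simpa using h2
  | cons hr _ ih =>
    rw [Multiset.cons_add, Multiset.cons_add]
    exact AddClosure.cons hr ih

lemma addClosure_mpost {R : S → S → Prop} :
    ∀ {o1 o2 : Option S}, OptRel R o1 o2 → AddClosure R (mpost o1) (mpost o2)
  | none, none, _ => AddClosure.zero
  | some a, some b, h => by
      rw [show mpost (some a) = a ::ₘ (0 : Multiset S) by simp [mpost],
        show mpost (some b) = b ::ₘ (0 : Multiset S) by simp [mpost]]
      exact AddClosure.cons h AddClosure.zero
  | some _, none, h => h.elim
  | none, some _, h => h.elim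

lemma addClosure_decomp {R : S → S → Prop} {m1 m2 : Multiset S}
    (h : AddClosure R m1 m2) {a : S} (ha : a ∈ m2) :
    ∃ b rest, m1 = b ::ₘ rest ∧ R b a ∧ AddClosure R rest (m2.erase a) := by
  induction h with
  | zero => simp at ha
  | @cons s1 s2 n1 n2 hr hAC ih =>
    by_cases h' : a ∈ n2
    · obtain ⟨b, rest, heq, hba, hAC'⟩ := ih h'
      refine ⟨b, s1 ::ₘ rest, by rw [heq, Multiset.cons_swap], hba, ?_⟩
      have hee : (s2 ::ₘ n2).erase a = s2 ::ₘ n2.erase a := by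
        by_cases h'' : a = s2
        · subst h''
          rw [Multiset.erase_cons_head, Multiset.cons_erase h']
        · rw [Multiset.erase_cons_tail]
          exact fun hc => h'' hc.symm
      rw [hee]
      exact AddClosure.cons hr hAC'
    · have h'' : a = s2 := by
        rcases Multiset.mem_cons.1 ha with h3 | h3
        · exact h3
        · exact absurd h3 h'
      subst h''
      refine ⟨s1, n1, rfl, hr, ?_⟩
      rw [Multiset.erase_cons_head]
      exact hAC

open scoped Classical in
lemma addClosure_countP {R : S → S → Prop}
    (hsymm : ∀ a b, R a b → R b a) (htrans : ∀ a b c, R a b → R b c → R a c)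
    {m1 m2 : Multiset S} (h : AddClosure R m1 m2) (x : S) :
    m1.countP (R x) = m2.countP (R x) := by
  induction h with
  | zero => rfl
  | @cons s1 s2 n1 n2 hr _ ih =>
    rw [Multiset.countP_cons, Multiset.countP_cons, ih]
    have hiff : R x s1 ↔ R x s2 :=
      ⟨fun h' => htrans _ _ _ h' hr, fun h' => htrans _ _ _ h' (hsymm _ _ hr)⟩
    simp only [hiff]

open scoped Classical in
lemma addClosure_cancel {R : S → S → Prop}
    (hrefl : ∀ a, R a a) (hsymm : ∀ a b, R a b → R b a)
    (htrans : ∀ a b c, R a b → R b c → R a c)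
    {a b : S} {c : Multiset S} (h : AddClosure R (a ::ₘ c) (b ::ₘ c)) : R a b := by
  have hc := addClosure_countP hsymm htrans h a
  rw [Multiset.countP_cons, Multiset.countP_cons, if_pos (hrefl a)] at hc
  by_cases hab : R a b
  · exact hab
  · rw [if_neg hab] at hc
    omega

/-! ### Marking-level moves -/

lemma add_single_eq (c : Multiset S) (a : S) : c + {a} = a ::ₘ c := by
  rw [add_comm, Multiset.singleton_add]

lemma silentReach_marking {s : S} {mo : Option S} (h : SilentReach T tau s mo)
    (c : Multiset S) : Reach T (s ::ₘ c) (c + mpost mo) := by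
  induction h with
  | refl =>
    rw [show mpost (some s) = ({s} : Multiset S) from rfl, add_single_eq]
    exact Relation.ReflTransGen.refl
  | step hpre htr ih =>
    rename_i s' mo'
    refine Relation.ReflTransGen.tail ih ⟨(s', tau, mo'), htr, ?_, ?_⟩
    · rw [show mpost (some s') = ({s'} : Multiset S) from rfl, add_single_eq]
      exact Multiset.mem_cons_self s' c
    · rw [show mpost (some s') = ({s'} : Multiset S) from rfl, add_single_eq,
        Multiset.erase_cons_head]

lemma step_match {q q' p' : Multiset S}
    (hAC : AddClosure (Bisimilar T tau) q q')
    {t : S × A × Option S} (hf : Fires T q' t p') :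
    ∃ p, Reach T q p ∧ AddClosure (Bisimilar T tau) p p' := by
  obtain ⟨s', ℓ, post'⟩ := t
  obtain ⟨hT, hmem, hp'⟩ := hf
  obtain ⟨b, rest, hq, hbs, hrest⟩ := addClosure_decomp hAC hmem
  have hsb : Bisimilar T tau s' b := bisimilar_symm hbs
  rcases ((isBisim_bisimilar T tau) s' b hsb).1 ℓ post' hT with
    ⟨_, m2, hsr, _, hpost⟩ | ⟨u, m2, hsr, htru, _, hpost⟩
  · refine ⟨rest + mpost m2, ?_, ?_⟩
    · rw [hq]
      exact silentReach_marking hsr rest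
    · rw [hp']
      exact addClosure_add hrest
        (addClosure_mpost (optRel_imp (fun _ _ h => bisimilar_symm h) (optRel_flip hpost)))
  · refine ⟨rest + mpost m2, ?_, ?_⟩
    · refine Relation.ReflTransGen.tail (show Reach T q (rest + {u}) from ?_)
        ⟨(u, ℓ, m2), htru, ?_, ?_⟩
      · rw [hq]
        exact silentReach_marking hsr rest
      · rw [add_single_eq]
        exact Multiset.mem_cons_self u rest
      · rw [add_single_eq, Multiset.erase_cons_head]
    · rw [hp']
      exact addClosure_add hrest
        (addClosure_mpost (optRel_imp (fun _ _ h => bisimilar_symm h) (optRel_flip hpost)))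

lemma reach_match {n n' p' : Multiset S}
    (hAC : AddClosure (Bisimilar T tau) n n') (hr : Reach T n' p') :
    ∃ p, Reach T n p ∧ AddClosure (Bisimilar T tau) p p' := by
  induction hr with
  | refl => exact ⟨n, Relation.ReflTransGen.refl, hAC⟩
  | tail _ hfire ih =>
    obtain ⟨p, hp, hpc⟩ := ih
    obtain ⟨t, hf⟩ := hfire
    obtain ⟨p2, hp2, hc2⟩ := step_match hpc hf
    exact ⟨p2, hp.trans hp2, hc2⟩

end Aux

/-- DNI is invariant under branching team equivalence `≈^⊕`. -/
theorem dni_invariant_team_equiv [Fintype S] [Fintype A] [DecidableEq S] [DecidableEq A]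
    (T : Finset (S × A × Option S)) (tau : A) (H : Finset A) (htau : tau ∉ H)
    {m m' : Multiset S} (hbis : AddClosure (Bisimilar T tau) m m')
    (hdni : DNI T tau H m) :
    DNI T tau H m' := by
  intro m1' m2' hr1 hr2 h hH hstep
  obtain ⟨t, hf, hl⟩ := hstep
  obtain ⟨s', ℓ, post'⟩ := t
  obtain ⟨hT, hmem, hm2'⟩ := hf
  have hl' : ℓ = h := hl
  subst hl'
  obtain ⟨m1, hm1r, hm1c⟩ := reach_match hbis hr1
  obtain ⟨rest', hm1'eq⟩ : ∃ r, m1' = s' ::ₘ r :=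
    ⟨m1'.erase s', (Multiset.cons_erase hmem).symm⟩
  subst hm1'eq
  rw [Multiset.erase_cons_head] at hm2'
  obtain ⟨b, rest, hm1eq, hbs, hrest⟩ :=
    addClosure_decomp hm1c (Multiset.mem_cons_self s' rest')
  rw [Multiset.erase_cons_head] at hrest
  have hsb : Bisimilar T tau s' b := bisimilar_symm hbs
  rcases ((isBisim_bisimilar T tau) s' b hsb).1 ℓ post' hT with
    ⟨hτ, _⟩ | ⟨u, post, hsr, htru, hsu, hpost⟩
  · have hlH : ℓ ∈ H := hH
    rw [hτ] at hlH
    exact absurd hlH htau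
  · have hreach1 : Reach T m1 (rest + {u}) := by
      rw [hm1eq]
      exact silentReach_marking hsr rest
    have hfire : Fires T (rest + {u}) (u, ℓ, post) (rest + mpost post) := by
      refine ⟨htru, ?_, ?_⟩
      · rw [add_single_eq]
        exact Multiset.mem_cons_self u rest
      · rw [add_single_eq, Multiset.erase_cons_head]
    have hRn1 : Reach T m (rest + {u}) := hm1r.trans hreach1
    have hRn2 : Reach T m (rest + mpost post) := hRn1.tail ⟨_, hfire⟩
    have hAC2 := hdni _ _ hRn1 hRn2 ℓ hH ⟨(u, ℓ, post), hfire, rfl⟩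
    cases post with
    | none =>
      exfalso
      have hcard := addClosure_card hAC2
      rw [add_single_eq] at hcard
      simp [mpost] at hcard
    | some p =>
      cases post' with
      | none => exact hpost.elim
      | some p' =>
        rw [add_single_eq, show mpost (some p) = ({p} : Multiset S) from rfl,
          add_single_eq] at hAC2
        have hup := addClosure_cancel (fun a => bisimilar_refl _ _ a)
          (fun a b hab => bisimilar_symm hab)
          (fun a b c h1 h2 => bisimilar_trans h1 h2) hAC2
        have h1 : Bisimilar (restrictNet T H) tau s' u := bisimilar_restrict htau hsu
        have h3 : Bisimilar (restrictNet T H) tau p p' :=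
          bisimilar_symm (bisimilar_restrict htau (show Bisimilar T tau p' p from hpost))
        have hfin := bisimilar_trans (bisimilar_trans h1 hup) h3
        rw [hm2', show mpost (some p') = ({p'} : Multiset S) from rfl, add_single_eq]
        exact AddClosure.cons hfin (addClosure_refl (fun a => bisimilar_refl _ _ a) rest')
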